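/- (Eckart–Young) Let A ∈ ℝ^{m×n} with m ≥ n have singular value decomposition A = U Σ Vᵀ with U, V orthogonal and Σ diagonal with diagonal entries σ₁ ≥ ⋯ ≥ σ_n ≥ 0, and let k < rank(A). Then for every matrix B ∈ ℝ^{m×n} with rank(B) = k, ‖A − B‖₂ ≥ σ_{k+1}; consequently the truncated SVD A_k = U Σ_k Vᵀ attains the minimum of ‖A − B‖₂ over all rank-k matrices B. -/

import Mathlib

/-!
Conjugating by the orthogonal factors, which preserve the spectral norm and do not raise the
rank, reduces both claims to the rectangular diagonal matrix `Σ`. A matrix `B` of rank at most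
`k` annihilates a nonzero vector supported on the first `k + 1` coordinates, and `Σ` stretches
such vectors by at least `σ_{k+1}`; hence `‖Σ - B‖₂ ≥ σ_{k+1}`. Conversely `Σ - Σ_k` is
diagonal with entries at most `σ_{k+1}`, so `‖Σ - Σ_k‖₂ ≤ σ_{k+1}`.
-/

open Matrix

/-- The Euclidean (2-)norm on `ℝ^m`. -/
noncomputable def enorm {m : ℕ} (v : Fin m → ℝ) : ℝ := Real.sqrt (∑ i, (v i) ^ 2)

/-- The spectral norm `‖A‖₂ = max_{‖x‖₂ = 1} ‖Ax‖₂` of a real matrix. -/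
noncomputable def matSpectralNorm {m n : ℕ} (A : Matrix (Fin m) (Fin n) ℝ) : ℝ :=
  sSup {r : ℝ | ∃ x : Fin n → ℝ, _root_.enorm x = 1 ∧ r = _root_.enorm (A.mulVec x)}

/-- `IsRSVD A U S V` says that `A = U Σ Vᵀ` is a singular value decomposition of the real
matrix `A`: `U`, `V` are orthogonal and `S` is diagonal with nonincreasing nonnegative
diagonal entries. -/
def IsRSVD {m n : ℕ} (A : Matrix (Fin m) (Fin n) ℝ) (U : Matrix (Fin m) (Fin m) ℝ)
    (S : Matrix (Fin m) (Fin n) ℝ) (V : Matrix (Fin n) (Fin n) ℝ) : Prop :=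
  Uᵀ * U = 1 ∧ Vᵀ * V = 1 ∧
  (∀ (i : Fin m) (j : Fin n), (i : ℕ) ≠ (j : ℕ) → S i j = 0) ∧
  (∀ (i : Fin m) (j : Fin n), 0 ≤ S i j) ∧
  (∀ (i i' : Fin m) (j j' : Fin n), (i : ℕ) = (j : ℕ) → (i' : ℕ) = (j' : ℕ) →
    (i : ℕ) ≤ (i' : ℕ) → S i' j' ≤ S i j) ∧
  A = U * S * Vᵀ

lemma enorm_eq_norm_toLp {q : ℕ} (v : Fin q → ℝ) :
    _root_.enorm v = ‖WithLp.toLp 2 v‖ := by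
  simp [_root_.enorm, EuclideanSpace.norm_eq]

lemma enorm_smul_of_nonneg {q : ℕ} {t : ℝ} (ht : 0 ≤ t) (v : Fin q → ℝ) :
    _root_.enorm (t • v) = t * _root_.enorm v := by
  rw [enorm_eq_norm_toLp, WithLp.toLp_smul, norm_smul, ← enorm_eq_norm_toLp,
    Real.norm_of_nonneg ht]

lemma enorm_pos_of_ne_zero {q : ℕ} {v : Fin q → ℝ} (hv : v ≠ 0) : 0 < _root_.enorm v := by
  simpa [enorm_eq_norm_toLp] using hv

lemma enorm_mulVec_of_transpose_mul_self {p q : ℕ} {Q : Matrix (Fin p) (Fin q) ℝ}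
    (hQ : Qᵀ * Q = 1) (x : Fin q → ℝ) : _root_.enorm (Q *ᵥ x) = _root_.enorm x := by
  have hdot : Q *ᵥ x ⬝ᵥ Q *ᵥ x = x ⬝ᵥ x := by
    calc Q *ᵥ x ⬝ᵥ Q *ᵥ x = x ⬝ᵥ (Qᵀ * Q) *ᵥ x := by
          rw [← mulVec_mulVec, dotProduct_mulVec x Qᵀ, vecMul_transpose]
      _ = x ⬝ᵥ x := by rw [hQ, one_mulVec]
  simpa only [_root_.enorm, dotProduct, sq] using congrArg Real.sqrt hdot

section SpectralNorm

variable {p q : ℕ} (M : Matrix (Fin p) (Fin q) ℝ)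

lemma bddAbove_enorm_mulVec_unit :
    BddAbove {r : ℝ | ∃ x : Fin q → ℝ, _root_.enorm x = 1 ∧ r = _root_.enorm (M *ᵥ x)} := by
  refine ⟨Real.sqrt (∑ i, ∑ j, M i j ^ 2), ?_⟩
  rintro r ⟨x, hx, rfl⟩
  have hx2 : ∑ j, x j ^ 2 = 1 := Real.sqrt_eq_one.mp hx
  refine Real.sqrt_le_sqrt (Finset.sum_le_sum fun i _ => ?_)
  calc (M *ᵥ x) i ^ 2 ≤ (∑ j, M i j ^ 2) * ∑ j, x j ^ 2 :=
        Finset.sum_mul_sq_le_sq_mul_sq Finset.univ (M i) x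
    _ = ∑ j, M i j ^ 2 := by rw [hx2, mul_one]

lemma enorm_mulVec_le_matSpectralNorm_mul (x : Fin q → ℝ) :
    _root_.enorm (M *ᵥ x) ≤ matSpectralNorm M * _root_.enorm x := by
  rcases eq_or_ne x 0 with rfl | hx
  · simp [_root_.enorm]
  have hpos := enorm_pos_of_ne_zero hx
  set t := (_root_.enorm x)⁻¹
  have hunit : _root_.enorm (t • x) = 1 := by
    rw [enorm_smul_of_nonneg (by positivity), inv_mul_cancel₀ hpos.ne']
  have hle : _root_.enorm (M *ᵥ (t • x)) ≤ matSpectralNorm M :=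
    le_csSup (bddAbove_enorm_mulVec_unit M) ⟨t • x, hunit, rfl⟩
  rwa [mulVec_smul, enorm_smul_of_nonneg (by positivity), inv_mul_le_iff₀ hpos, mul_comm]
    at hle

lemma matSpectralNorm_le (hq : 0 < q) {c : ℝ}
    (h : ∀ x : Fin q → ℝ, _root_.enorm x = 1 → _root_.enorm (M *ᵥ x) ≤ c) :
    matSpectralNorm M ≤ c := by
  refine csSup_le ⟨_, Pi.single ⟨0, hq⟩ 1, ?_, rfl⟩ ?_
  · simp [enorm_eq_norm_toLp]
  · rintro r ⟨x, hx, rfl⟩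
    exact h x hx

lemma matSpectralNorm_mul_mul_transpose {p' : ℕ} {U : Matrix (Fin p') (Fin p) ℝ}
    {V : Matrix (Fin q) (Fin q) ℝ} (hU : Uᵀ * U = 1) (hV : Vᵀ * V = 1) :
    matSpectralNorm (U * M * Vᵀ) = matSpectralNorm M := by
  have hVt : Vᵀᵀ * Vᵀ = 1 := by rw [transpose_transpose, mul_eq_one_comm.mp hV]
  unfold matSpectralNorm
  congr 1
  ext s
  constructor
  · rintro ⟨x, hx, rfl⟩
    refine ⟨Vᵀ *ᵥ x, by rw [enorm_mulVec_of_transpose_mul_self hVt, hx], ?_⟩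
    rw [← mulVec_mulVec, ← mulVec_mulVec, enorm_mulVec_of_transpose_mul_self hU]
  · rintro ⟨y, hy, rfl⟩
    refine ⟨V *ᵥ y, by rw [enorm_mulVec_of_transpose_mul_self hV, hy], ?_⟩
    rw [Matrix.mul_assoc, ← mulVec_mulVec, enorm_mulVec_of_transpose_mul_self hU, mulVec_mulVec,
      Matrix.mul_assoc, hV, Matrix.mul_one]

end SpectralNorm

lemma Matrix.exists_mulVec_eq_zero_of_rank_lt {K ι κ : Type*} [Field K] [Fintype κ]
    (C : Matrix ι κ K) (h : C.rank < Fintype.card κ) : ∃ c ≠ 0, C *ᵥ c = 0 := by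
  have hker : LinearMap.ker C.mulVecLin ≠ ⊥ := by
    intro hbot
    have := LinearMap.finrank_range_add_finrank_ker C.mulVecLin
    rw [hbot, finrank_bot, add_zero, Module.finrank_fintype_fun_eq_card] at this
    exact h.ne this
  obtain ⟨c, hc, hc0⟩ := (Submodule.ne_bot_iff _).mp hker
  exact ⟨c, hc0, hc⟩

lemma Matrix.submatrix_id_mulVec_of_injective {R ι κ ρ : Type*} [NonUnitalNonAssocSemiring R]
    [Fintype ι] [Fintype κ] (B : Matrix ρ κ R) {e : ι → κ} (he : e.Injective) (c : ι → R) :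
    B.submatrix id e *ᵥ c = B *ᵥ Function.extend e c 0 := by
  ext i
  refine Fintype.sum_of_injective e he _ _ (fun j hj => ?_) (fun a => ?_)
  · rw [Function.extend_apply' _ _ _ (by simpa using hj), Pi.zero_apply, mul_zero]
  · rw [he.extend_apply]
    rfl

lemma exists_mulVec_eq_zero_supported_of_rank_le {m n k : ℕ} {B : Matrix (Fin m) (Fin n) ℝ}
    (hB : B.rank ≤ k) (hkn : k < n) :
    ∃ w ≠ 0, (∀ j : Fin n, k < (j : ℕ) → w j = 0) ∧ B *ᵥ w = 0 := by
  have hrank : (B.submatrix id (Fin.castLE hkn)).rank < Fintype.card (Fin (k + 1)) := by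
    rw [Fintype.card_fin]
    exact Nat.lt_succ_of_le ((rank_submatrix_le _ _ _).trans hB)
  obtain ⟨c, hc0, hc⟩ := exists_mulVec_eq_zero_of_rank_lt _ hrank
  have hinj := Fin.castLE_injective hkn
  refine ⟨Function.extend (Fin.castLE hkn) c 0, fun hw => hc0 ?_, fun j hj => ?_, ?_⟩
  · ext a
    simpa [hinj.extend_apply] using congrFun hw (Fin.castLE hkn a)
  · refine Function.extend_apply' _ _ _ ?_
    rintro ⟨a, rfl⟩
    exact hj.not_ge (Nat.le_of_lt_succ a.isLt)
  · rw [← submatrix_id_mulVec_of_injective B hinj, hc]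

section RectangularDiagonal

variable {m n : ℕ} (hnm : n ≤ m) {D : Matrix (Fin m) (Fin n) ℝ}
  (hD : ∀ (i : Fin m) (j : Fin n), (i : ℕ) ≠ (j : ℕ) → D i j = 0)
include hD

lemma sum_sq_mulVec_of_rectDiag (y : Fin n → ℝ) :
    ∑ i, (D *ᵥ y) i ^ 2 = ∑ j, (D (Fin.castLE hnm j) j * y j) ^ 2 := by
  refine (Fintype.sum_of_injective _ (Fin.castLE_injective hnm) _ _ (fun i hi => ?_)
    (fun j => ?_)).symm
  · have hin : n ≤ (i : ℕ) := by
      by_contra! h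
      exact hi ⟨⟨i, h⟩, rfl⟩
    rw [sq_eq_zero_iff, mulVec, dotProduct]
    exact Finset.sum_eq_zero fun j _ => by rw [hD i j (by omega), zero_mul]
  · rw [mulVec, dotProduct, Fintype.sum_eq_single j fun j' hj' => ?_]
    rw [hD _ _ (by simpa [Fin.val_eq_val] using hj'.symm), zero_mul]

lemma enorm_mulVec_le_of_rectDiag {c : ℝ} (hc : 0 ≤ c)
    (hDc : ∀ j, |D (Fin.castLE hnm j) j| ≤ c) (y : Fin n → ℝ) :
    _root_.enorm (D *ᵥ y) ≤ c * _root_.enorm y := by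
  rw [← enorm_smul_of_nonneg hc]
  refine Real.sqrt_le_sqrt ?_
  rw [sum_sq_mulVec_of_rectDiag hnm hD]
  refine Finset.sum_le_sum fun j _ => sq_le_sq.mpr ?_
  rw [Pi.smul_apply, smul_eq_mul, abs_mul, abs_mul, abs_of_nonneg hc]
  exact mul_le_mul_of_nonneg_right (hDc j) (abs_nonneg _)

lemma le_enorm_mulVec_of_rectDiag {c : ℝ} (hc : 0 ≤ c) (y : Fin n → ℝ)
    (hDc : ∀ j, y j ≠ 0 → c ≤ |D (Fin.castLE hnm j) j|) :
    c * _root_.enorm y ≤ _root_.enorm (D *ᵥ y) := by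
  rw [← enorm_smul_of_nonneg hc]
  refine Real.sqrt_le_sqrt ?_
  rw [sum_sq_mulVec_of_rectDiag hnm hD]
  refine Finset.sum_le_sum fun j _ => sq_le_sq.mpr ?_
  rw [Pi.smul_apply, smul_eq_mul, abs_mul, abs_mul, abs_of_nonneg hc]
  rcases eq_or_ne (y j) 0 with hy | hy
  · simp [hy]
  · exact mul_le_mul_of_nonneg_right (hDc j hy) (abs_nonneg _)

lemma matSpectralNorm_le_of_rectDiag (hn : 0 < n) {c : ℝ} (hc : 0 ≤ c)
    (hDc : ∀ j, |D (Fin.castLE hnm j) j| ≤ c) : matSpectralNorm D ≤ c :=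
  matSpectralNorm_le D hn fun y hy => by
    simpa [hy] using enorm_mulVec_le_of_rectDiag hnm hD hc hDc y

lemma le_matSpectralNorm_sub_of_rank_le {k : ℕ} (hkn : k < n) {c : ℝ} (hc : 0 ≤ c)
    (hDc : ∀ j : Fin n, (j : ℕ) ≤ k → c ≤ |D (Fin.castLE hnm j) j|)
    {B : Matrix (Fin m) (Fin n) ℝ} (hB : B.rank ≤ k) : c ≤ matSpectralNorm (D - B) := by
  obtain ⟨w, hw0, hwk, hBw⟩ := exists_mulVec_eq_zero_supported_of_rank_le hB hkn
  refine le_of_mul_le_mul_right ?_ (enorm_pos_of_ne_zero hw0)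
  calc c * _root_.enorm w ≤ _root_.enorm (D *ᵥ w) :=
        le_enorm_mulVec_of_rectDiag hnm hD hc w fun j hj => hDc j (not_lt.mp (mt (hwk j) hj))
    _ = _root_.enorm ((D - B) *ᵥ w) := by rw [sub_mulVec, hBw, sub_zero]
    _ ≤ matSpectralNorm (D - B) * _root_.enorm w := enorm_mulVec_le_matSpectralNorm_mul _ w

end RectangularDiagonal

lemma matSpectralNorm_sub_truncation_le {m n k : ℕ} (hnm : n ≤ m) (hkn : k < n)
    {S : Matrix (Fin m) (Fin n) ℝ}
    (hdiag : ∀ (i : Fin m) (j : Fin n), (i : ℕ) ≠ (j : ℕ) → S i j = 0)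
    (hpos : ∀ (i : Fin m) (j : Fin n), 0 ≤ S i j)
    (hmono : ∀ (i i' : Fin m) (j j' : Fin n), (i : ℕ) = (j : ℕ) → (i' : ℕ) = (j' : ℕ) →
      (i : ℕ) ≤ (i' : ℕ) → S i' j' ≤ S i j) :
    matSpectralNorm (S - of fun (i : Fin m) (j : Fin n) =>
      if (i : ℕ) < k ∧ (j : ℕ) < k then S i j else 0) ≤
      S (Fin.castLE hnm ⟨k, hkn⟩) ⟨k, hkn⟩ := by
  refine matSpectralNorm_le_of_rectDiag hnm (fun i j hij => ?_) (by omega) (hpos _ _)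
    fun j => ?_
  · simp [hdiag i j hij]
  · by_cases hj : (j : ℕ) < k
    · simpa [hj] using hpos _ _
    · have hle := hmono (Fin.castLE hnm ⟨k, hkn⟩) (Fin.castLE hnm j) ⟨k, hkn⟩ j rfl rfl
        (not_lt.mp hj)
      simpa [hj, abs_of_nonneg (hpos _ _)] using hle

theorem eckart_young_general {m n k : ℕ} (hnm : n ≤ m)
    (A : Matrix (Fin m) (Fin n) ℝ) (U : Matrix (Fin m) (Fin m) ℝ)
    (S : Matrix (Fin m) (Fin n) ℝ) (V : Matrix (Fin n) (Fin n) ℝ)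
    (hsvd : IsRSVD A U S V) (hkn : k < n)
    (Sk : Matrix (Fin m) (Fin n) ℝ)
    (hSk : Sk = Matrix.of fun (i : Fin m) (j : Fin n) =>
      if (i : ℕ) < k ∧ (j : ℕ) < k then S i j else 0) :
    (∀ B : Matrix (Fin m) (Fin n) ℝ, B.rank = k →
      S (Fin.castLE hnm ⟨k, hkn⟩) ⟨k, hkn⟩ ≤ matSpectralNorm (A - B)) ∧
    (∀ B : Matrix (Fin m) (Fin n) ℝ, B.rank = k →
      matSpectralNorm (A - U * Sk * Vᵀ) ≤ matSpectralNorm (A - B)) := by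
  obtain ⟨hU, hV, hdiag, hpos, hmono, rfl⟩ := hsvd
  have lower : ∀ B : Matrix (Fin m) (Fin n) ℝ, B.rank = k →
      S (Fin.castLE hnm ⟨k, hkn⟩) ⟨k, hkn⟩ ≤ matSpectralNorm (U * S * Vᵀ - B) := by
    intro B hB
    have hB' : B = U * (Uᵀ * B * V) * Vᵀ := by
      simp only [← Matrix.mul_assoc, mul_eq_one_comm.mp hU, Matrix.one_mul]
      rw [Matrix.mul_assoc, mul_eq_one_comm.mp hV, Matrix.mul_one]
    rw [hB', ← Matrix.sub_mul, ← Matrix.mul_sub, matSpectralNorm_mul_mul_transpose _ hU hV]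
    refine le_matSpectralNorm_sub_of_rank_le hnm hdiag hkn (hpos _ _) (fun j hj => ?_) ?_
    · exact (hmono _ _ _ _ rfl rfl hj).trans (le_abs_self _)
    · exact hB ▸ (rank_mul_le_left _ _).trans (rank_mul_le_right _ _)
  refine ⟨lower, fun B hB => le_trans ?_ (lower B hB)⟩
  rw [hSk, ← Matrix.sub_mul, ← Matrix.mul_sub, matSpectralNorm_mul_mul_transpose _ hU hV]
  exact matSpectralNorm_sub_truncation_le hnm hkn hdiag hpos hmono

/-- (Eckart–Young) For `A ∈ ℝ^{m×n}` (`m ≥ n`) with SVD `A = U Σ Vᵀ` and `k < rank(A)`: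
every rank-`k` matrix `B` satisfies `‖A − B‖₂ ≥ σ_{k+1}`, and the truncated SVD
`A_k = U Σ_k Vᵀ` attains the minimum of `‖A − B‖₂` over all rank-`k` matrices `B`. -/
theorem eckart_young {m n k : ℕ} (hnm : n ≤ m)
    (A : Matrix (Fin m) (Fin n) ℝ) (U : Matrix (Fin m) (Fin m) ℝ)
    (S : Matrix (Fin m) (Fin n) ℝ) (V : Matrix (Fin n) (Fin n) ℝ)
    (hsvd : IsRSVD A U S V) (hk : k < A.rank) (hkn : k < n)
    (Sk : Matrix (Fin m) (Fin n) ℝ)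
    (hSk : Sk = Matrix.of fun (i : Fin m) (j : Fin n) =>
      if (i : ℕ) < k ∧ (j : ℕ) < k then S i j else 0) :
    (∀ B : Matrix (Fin m) (Fin n) ℝ, B.rank = k →
      S (Fin.castLE hnm ⟨k, hkn⟩) ⟨k, hkn⟩ ≤ matSpectralNorm (A - B)) ∧
    (∀ B : Matrix (Fin m) (Fin n) ℝ, B.rank = k →
      matSpectralNorm (A - U * Sk * Vᵀ) ≤ matSpectralNorm (A - B)) :=
  eckart_young_general hnm A U S V hsvd hkn Sk hSk
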